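/- arXiv:1404.5438 — 3 statements merged into one kernel-verified Lean document; each statement's English description precedes it below -/
import Mathlib

section
/- There exists a constant C > 0 such that for every bounded measurable function Ψ : ℝ → ℝ and all points x = (x₁,x₂), y = (y₁,y₂) ∈ ℝ² with x₁ > 0 and y₁ > 0, one has |∫_ℝ [G(x₁, x₂−z) − G(y₁, y₂−z) − (x₂−y₂)·(∂₂G)(y₁, y₂−z)] Ψ(z) dz| ≤ C ‖Ψ‖_{L^∞(ℝ)} · (|x₁−y₁| + |x₂−y₂|²) / min(x₁, y₁), where ∂₂G denotes the spatial derivative of G. -/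
/-!
Write `g t` for the heat kernel at time `t` and `d = x₂ - y₂`. After the substitution
`w = y₂ - z`, the kernel is `(g x₁ - g y₁) (w + d) + (g y₁ (w + d) - g y₁ w - d ∂ₓg y₁ w)`, so it
suffices to bound the `L¹` norm of a time increment by `|x₁ - y₁| / min x₁ y₁` and that of a
first-order Taylor remainder by `d² / y₁`. Both follow from the mean value theorem, with
`∂ₜg = ∂ₓ²g` and the envelope `|∂ₓ²g t x| ≤ 4 / t * g (2 t) x`: over the times and points involved,
the kernel at doubled time changes by at most a factor `2`, and its integral is `1`. When `x₁` and
`y₁` are not comparable, or `d² > y₁`, bounding by the total masses suffices.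
-/

noncomputable section

open MeasureTheory

/-- The one-dimensional heat kernel on `ℝ²`. -/
def heatG : ℝ × ℝ → ℝ := fun p =>
  if 0 < p.1 then (4 * Real.pi * p.1) ^ (-(1:ℝ)/2) * Real.exp (-(p.2 ^ 2) / (4 * p.1)) else 0

open Real

lemma sq_mul_exp_neg_sq_div_le {c : ℝ} (hc : 0 < c) (x : ℝ) : x ^ 2 * exp (-x ^ 2 / c) ≤ c := by
  have h := add_one_le_exp (x ^ 2 / c)
  rw [neg_div, exp_neg, ← div_eq_mul_inv, div_le_iff₀ (exp_pos _)]
  calc x ^ 2 ≤ c * (x ^ 2 / c + 1) := by rw [mul_add, mul_div_cancel₀ _ hc.ne']; linarith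
    _ ≤ c * exp (x ^ 2 / c) := by gcongr

lemma abs_mul_exp_neg_sq_div_le {c : ℝ} (hc : 0 < c) (x : ℝ) :
    |x| * exp (-x ^ 2 / (2 * c)) ≤ √c := by
  have h : (x * exp (-x ^ 2 / (2 * c))) ^ 2 = x ^ 2 * exp (-x ^ 2 / c) := by
    rw [mul_pow, ← exp_nat_mul]; congr 2; field_simp; ring
  have := abs_le_sqrt (h ▸ sq_mul_exp_neg_sq_div_le hc x)
  rwa [abs_mul, abs_of_pos (exp_pos _)] at this

lemma abs_sub_sub_mul_le_of_abs_deriv2_le {f f' f'' : ℝ → ℝ} {w d C : ℝ}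
    (hf : ∀ x ∈ Set.uIcc w (w + d), HasDerivAt f (f' x) x)
    (hf' : ∀ x ∈ Set.uIcc w (w + d), HasDerivAt f' (f'' x) x)
    (hC : ∀ x ∈ Set.uIcc w (w + d), |f'' x| ≤ C) :
    |f (w + d) - f w - d * f' w| ≤ C * d ^ 2 := by
  have hC₀ : 0 ≤ C := (abs_nonneg _).trans (hC w Set.left_mem_uIcc)
  have hslope : ∀ x ∈ Set.uIcc w (w + d), ‖f' x - f' w‖ ≤ C * |d| := fun x hx =>
    ((convex_uIcc w (w + d)).norm_image_sub_le_of_norm_hasDerivWithin_le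
      (fun y hy => (hf' y hy).hasDerivWithinAt) hC Set.left_mem_uIcc hx).trans
      (by simpa using mul_le_mul_of_nonneg_left (Set.abs_sub_left_of_mem_uIcc hx) hC₀)
  have hlin : ∀ x ∈ Set.uIcc w (w + d),
      HasDerivAt (fun y => f y - y * f' w) (f' x - f' w) x := fun x hx =>
    (hf x hx).sub (by simpa using (hasDerivAt_id x).mul_const (f' w))
  have := (convex_uIcc w (w + d)).norm_image_sub_le_of_norm_hasDerivWithin_le
    (fun x hx => (hlin x hx).hasDerivWithinAt) hslope Set.left_mem_uIcc Set.right_mem_uIcc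
  calc |f (w + d) - f w - d * f' w| = ‖f (w + d) - (w + d) * f' w - (f w - w * f' w)‖ := by
        rw [Real.norm_eq_abs]; congr 1; ring
    _ ≤ C * |d| * ‖w + d - w‖ := this
    _ = C * d ^ 2 := by rw [add_sub_cancel_left, Real.norm_eq_abs, mul_assoc, abs_mul_abs_self, sq]

lemma abs_integral_mul_le_of_abs_le {α : Type*} [MeasurableSpace α] {μ : Measure α}
    {f g : α → ℝ} {M : ℝ} (hf : Integrable f μ) (hg : ∀ x, |g x| ≤ M) :
    |∫ x, f x * g x ∂μ| ≤ M * ∫ x, |f x| ∂μ := by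
  rw [← integral_const_mul, ← Real.norm_eq_abs]
  refine norm_integral_le_of_norm_le (hf.abs.const_mul M) (Filter.Eventually.of_forall fun x => ?_)
  rw [Real.norm_eq_abs, abs_mul, mul_comm]
  exact mul_le_mul_of_nonneg_right (hg x) (abs_nonneg _)

def heatKernel (t x : ℝ) : ℝ := exp (-x ^ 2 / (4 * t)) / √(4 * π * t)

def heatKernelDx (t x : ℝ) : ℝ := -(x / (2 * t)) * heatKernel t x

def heatKernelDxx (t x : ℝ) : ℝ := (x ^ 2 / (4 * t ^ 2) - 1 / (2 * t)) * heatKernel t x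

lemma heatG_eq_heatKernel {t : ℝ} (ht : 0 < t) (x : ℝ) : heatG (t, x) = heatKernel t x := by
  simp only [heatG, if_pos ht, heatKernel]
  rw [sqrt_eq_rpow, div_eq_mul_inv (exp _), ← rpow_neg (by positivity), mul_comm]
  norm_num

lemma heatKernel_nonneg (t x : ℝ) : 0 ≤ heatKernel t x := by
  unfold heatKernel; positivity

lemma heatKernel_eq_mul_exp (t : ℝ) :
    heatKernel t = fun x => (√(4 * π * t))⁻¹ * exp (-(1 / (4 * t)) * x ^ 2) := by
  ext x; rw [heatKernel, div_eq_inv_mul]; ring_nf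

lemma integrable_heatKernel {t : ℝ} (ht : 0 < t) : Integrable (heatKernel t) := by
  rw [heatKernel_eq_mul_exp]
  exact (integrable_exp_neg_mul_sq (by positivity)).const_mul _

lemma integral_heatKernel {t : ℝ} (ht : 0 < t) : ∫ x, heatKernel t x = 1 := by
  have h : π / (1 / (4 * t)) = 4 * π * t := by field_simp
  rw [heatKernel_eq_mul_exp, integral_const_mul, integral_gaussian, h]
  exact inv_mul_cancel₀ (by positivity)

lemma hasDerivAt_heatKernel (t x : ℝ) : HasDerivAt (heatKernel t) (heatKernelDx t x) x := by
  have h : HasDerivAt (fun y => -y ^ 2 / (4 * t)) (-(2 * x) / (4 * t)) x := by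
    simpa using (hasDerivAt_pow 2 x).neg.div_const (4 * t)
  exact (h.exp.div_const _).congr_deriv (by unfold heatKernelDx heatKernel; ring)

lemma hasDerivAt_heatKernelDx (t x : ℝ) : HasDerivAt (heatKernelDx t) (heatKernelDxx t x) x := by
  have h : HasDerivAt (fun y => -(y / (2 * t))) (-(1 / (2 * t))) x :=
    ((hasDerivAt_id x).div_const (2 * t)).neg
  exact (h.mul (hasDerivAt_heatKernel t x)).congr_deriv
    (by unfold heatKernelDxx heatKernelDx heatKernel; ring)

lemma hasDerivAt_heatKernel_time {t : ℝ} (ht : 0 < t) (x : ℝ) :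
    HasDerivAt (fun s => heatKernel s x) (heatKernelDxx t x) t := by
  have hexp := ((hasDerivAt_const t (-x ^ 2)).div ((hasDerivAt_id' t).const_mul 4)
    (by positivity)).exp
  have hsqrt := ((hasDerivAt_id' t).const_mul (4 * π)).sqrt (by positivity)
  have hR : √(4 * t * π) ^ 2 = 4 * t * π := sq_sqrt (by positivity)
  refine (hexp.div hsqrt (by positivity)).congr_deriv ?_
  simp only [heatKernelDxx, heatKernel, Pi.div_apply]
  field_simp
  rw [hR]
  ring

lemma sqrt_two_mul_heatKernel_two_mul (t x : ℝ) :
    √2 * heatKernel (2 * t) x = exp (-x ^ 2 / (8 * t)) / √(4 * π * t) := by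
  rw [heatKernel, show 4 * π * (2 * t) = 2 * (4 * π * t) by ring, sqrt_mul zero_le_two]
  field_simp
  ring_nf

lemma heatKernel_eq_exp_mul_heatKernel_two_mul (t x : ℝ) :
    heatKernel t x = exp (-x ^ 2 / (8 * t)) * (√2 * heatKernel (2 * t) x) := by
  rw [sqrt_two_mul_heatKernel_two_mul t, heatKernel, mul_div_assoc', ← exp_add]
  congr 2; field_simp; ring

lemma abs_heatKernelDx_le {t : ℝ} (ht : 0 < t) (x : ℝ) :
    |heatKernelDx t x| ≤ 2 / √t * heatKernel (2 * t) x := by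
  have hx : |x| * exp (-x ^ 2 / (8 * t)) ≤ 2 * √t := by
    have h := abs_mul_exp_neg_sq_div_le (by positivity : 0 < 4 * t) x
    rwa [show 2 * (4 * t) = 8 * t by ring, sqrt_mul zero_le_four,
      show (4 : ℝ) = 2 ^ 2 by norm_num, sqrt_sq zero_le_two] at h
  have hg := heatKernel_nonneg (2 * t) x
  calc |heatKernelDx t x| = |x| * exp (-x ^ 2 / (8 * t)) / (2 * t) * √2 * heatKernel (2 * t) x := by
        rw [heatKernelDx, heatKernel_eq_exp_mul_heatKernel_two_mul t, abs_mul, abs_neg, abs_div,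
          abs_of_pos (by positivity : 0 < 2 * t),
          abs_of_nonneg (mul_nonneg (exp_pos _).le (mul_nonneg (sqrt_nonneg 2) hg))]
        ring
    _ ≤ 2 * √t / (2 * t) * 2 * heatKernel (2 * t) x := by
        gcongr
        exact sqrt_le_self_iff.mpr (.inr one_le_two)
    _ = 2 / √t * heatKernel (2 * t) x := by
        field_simp
        rw [sq_sqrt ht.le]

lemma abs_heatKernelDxx_le {t : ℝ} (ht : 0 < t) (x : ℝ) :
    |heatKernelDxx t x| ≤ 4 / t * heatKernel (2 * t) x := by
  set E := exp (-x ^ 2 / (8 * t))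
  have hE : E ≤ 1 :=
    exp_le_one_iff.mpr (div_nonpos_of_nonpos_of_nonneg (by nlinarith) (by positivity))
  have hsq : x ^ 2 / (4 * t ^ 2) * E ≤ 2 / t := by
    have := sq_mul_exp_neg_sq_div_le (by positivity : 0 < 8 * t) x
    rw [div_mul_eq_mul_div, div_le_div_iff₀ (by positivity) ht]
    nlinarith
  have hone : 1 / (2 * t) * E ≤ 2 / t := by
    rw [div_mul_eq_mul_div, div_le_div_iff₀ (by positivity) ht]
    nlinarith
  have hpoly : |x ^ 2 / (4 * t ^ 2) * E - 1 / (2 * t) * E| ≤ 2 / t :=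
    abs_sub_le_of_nonneg_of_le (by positivity) hsq (by positivity) hone
  have hg := heatKernel_nonneg (2 * t) x
  calc |heatKernelDxx t x|
        = |x ^ 2 / (4 * t ^ 2) * E - 1 / (2 * t) * E| * √2 * heatKernel (2 * t) x := by
        rw [heatKernelDxx, heatKernel_eq_exp_mul_heatKernel_two_mul t, ← sub_mul, ← mul_assoc,
          abs_mul _ (√2 * _), abs_of_nonneg (mul_nonneg (sqrt_nonneg 2) hg), mul_assoc]
    _ ≤ 2 / t * 2 * heatKernel (2 * t) x := by gcongr; exact sqrt_le_self_iff.mpr (.inr one_le_two)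
    _ = 4 / t * heatKernel (2 * t) x := by ring

lemma sqrt_mul_heatKernel {t : ℝ} (ht : 0 < t) (x : ℝ) :
    √t * heatKernel t x = exp (-x ^ 2 / (4 * t)) / √(4 * π) := by
  rw [heatKernel, sqrt_mul (by positivity) t]
  field_simp

lemma sqrt_mul_heatKernel_le {s t : ℝ} (hs : 0 < s) (hst : s ≤ t) (x : ℝ) :
    √s * heatKernel s x ≤ √t * heatKernel t x := by
  rw [sqrt_mul_heatKernel hs, sqrt_mul_heatKernel (hs.trans_le hst), neg_div, neg_div]
  gcongr

lemma heatKernel_le_two_mul_heatKernel_two_mul_of_sq_sub_le {t u w : ℝ} (ht : 0 < t)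
    (huw : (u - w) ^ 2 ≤ t) : heatKernel t u ≤ 2 * heatKernel (2 * t) w := by
  have hquarter : exp (1 / 4) ≤ 4 / 3 := by
    have := exp_bound_div_one_sub_of_interval (x := 1 / 4) (by norm_num) (by norm_num)
    norm_num at this ⊢
    linarith
  have hexponent : -u ^ 2 / (4 * t) ≤ 1 / 4 + -w ^ 2 / (8 * t) := by
    rw [show 1 / 4 + -w ^ 2 / (8 * t) = (2 * t - w ^ 2) / (8 * t) by field_simp; ring,
      show -u ^ 2 / (4 * t) = -2 * u ^ 2 / (8 * t) by field_simp; ring]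
    gcongr
    nlinarith [sq_nonneg (2 * u - w)]
  have hg := heatKernel_nonneg (2 * t) w
  calc heatKernel t u ≤ exp (1 / 4) * exp (-w ^ 2 / (8 * t)) / √(4 * π * t) := by
        rw [heatKernel, ← exp_add]; gcongr
    _ ≤ 4 / 3 * (√2 * heatKernel (2 * t) w) := by
        rw [sqrt_two_mul_heatKernel_two_mul t, mul_div_assoc]; gcongr
    _ ≤ 2 * heatKernel (2 * t) w := by nlinarith [sqrt_two_lt_three_halves]

lemma heatKernel_le_two_mul_heatKernel_of_le {s t : ℝ} (hs : 0 < s) (hst : s ≤ t)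
    (hts : t ≤ 4 * s) (x : ℝ) : heatKernel s x ≤ 2 * heatKernel t x := by
  have hroot : √t ≤ 2 * √s :=
    (sqrt_le_left (by positivity)).mpr (by rw [mul_pow, sq_sqrt hs.le]; linarith)
  have h := (sqrt_mul_heatKernel_le hs hst x).trans
    (mul_le_mul_of_nonneg_right hroot (heatKernel_nonneg t x))
  rw [mul_comm 2, mul_assoc] at h
  exact le_of_mul_le_mul_left h (sqrt_pos.mpr hs)

lemma abs_heatKernel_sub_le_of_le {t₁ t₂ : ℝ} (h₁ : 0 < t₁) (h₁₂ : t₁ ≤ t₂) (h₂₁ : t₂ ≤ 2 * t₁)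
    (x : ℝ) : |heatKernel t₂ x - heatKernel t₁ x| ≤ 8 * (t₂ - t₁) / t₁ * heatKernel (2 * t₂) x := by
  have hbound : ∀ s ∈ Set.Icc t₁ t₂, ‖heatKernelDxx s x‖ ≤ 8 / t₁ * heatKernel (2 * t₂) x := by
    intro s ⟨hs₁, hs₂⟩
    have hs : 0 < s := h₁.trans_le hs₁
    calc ‖heatKernelDxx s x‖ ≤ 4 / s * heatKernel (2 * s) x := abs_heatKernelDxx_le hs x
      _ ≤ 4 / t₁ * (2 * heatKernel (2 * t₂) x) := by
          gcongr
          · exact heatKernel_nonneg _ _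
          · exact heatKernel_le_two_mul_heatKernel_of_le (by positivity) (by linarith)
              (by linarith) x
      _ = 8 / t₁ * heatKernel (2 * t₂) x := by ring
  have := (convex_Icc t₁ t₂).norm_image_sub_le_of_norm_hasDerivWithin_le
    (fun s hs => (hasDerivAt_heatKernel_time (h₁.trans_le hs.1) x).hasDerivWithinAt) hbound
    (Set.left_mem_Icc.mpr h₁₂) (Set.right_mem_Icc.mpr h₁₂)
  rw [Real.norm_eq_abs, Real.norm_eq_abs, abs_of_nonneg (sub_nonneg.mpr h₁₂)] at this
  exact this.trans_eq (by ring)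

lemma abs_heatKernel_sub_heatKernel_le_add (s t x y : ℝ) :
    |heatKernel s x - heatKernel t y| ≤ heatKernel s x + heatKernel t y :=
  abs_sub_le_iff.mpr ⟨by linarith [heatKernel_nonneg t y], by linarith [heatKernel_nonneg s x]⟩

lemma integrable_heatKernelDx {t : ℝ} (ht : 0 < t) : Integrable (heatKernelDx t) :=
  ((integrable_heatKernel (by positivity : 0 < 2 * t)).const_mul (2 / √t)).mono'
    (Differentiable.continuous fun x =>
      (hasDerivAt_heatKernelDx t x).differentiableAt).aestronglyMeasurable
    (Filter.Eventually.of_forall (abs_heatKernelDx_le ht))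

lemma integrable_heatKernel_increment {s t : ℝ} (hs : 0 < s) (ht : 0 < t) (d : ℝ) :
    Integrable fun x => heatKernel s (x + d) - heatKernel t x - d * heatKernelDx t x :=
  (((integrable_heatKernel hs).comp_add_right d).sub (integrable_heatKernel ht)).sub
    ((integrable_heatKernelDx ht).const_mul d)

lemma integral_abs_heatKernel_sub_le_of_le {t₁ t₂ : ℝ} (h₁ : 0 < t₁) (h₁₂ : t₁ ≤ t₂) :
    ∫ x, |heatKernel t₂ x - heatKernel t₁ x| ≤ 8 * (t₂ - t₁) / t₁ := by
  have h₂ : 0 < t₂ := h₁.trans_le h₁₂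
  have hint := ((integrable_heatKernel h₂).sub (integrable_heatKernel h₁)).abs
  rcases le_or_gt t₂ (2 * t₁) with hclose | hfar
  · calc ∫ x, |heatKernel t₂ x - heatKernel t₁ x|
        ≤ ∫ x, 8 * (t₂ - t₁) / t₁ * heatKernel (2 * t₂) x :=
          integral_mono hint ((integrable_heatKernel (by positivity)).const_mul _)
            (abs_heatKernel_sub_le_of_le h₁ h₁₂ hclose)
      _ = 8 * (t₂ - t₁) / t₁ := by
          rw [integral_const_mul, integral_heatKernel (by positivity), mul_one]
  · calc ∫ x, |heatKernel t₂ x - heatKernel t₁ x|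
        ≤ ∫ x, (heatKernel t₂ x + heatKernel t₁ x) :=
          integral_mono hint ((integrable_heatKernel h₂).add (integrable_heatKernel h₁))
            fun x => abs_heatKernel_sub_heatKernel_le_add t₂ t₁ x x
      _ = 2 := by
          rw [integral_add (integrable_heatKernel h₂) (integrable_heatKernel h₁),
            integral_heatKernel h₂, integral_heatKernel h₁]
          norm_num
      _ ≤ 8 * (t₂ - t₁) / t₁ := by rw [le_div_iff₀ h₁]; linarith

lemma integral_abs_heatKernel_sub_le {s t : ℝ} (hs : 0 < s) (ht : 0 < t) :
    ∫ x, |heatKernel s x - heatKernel t x| ≤ 8 * |s - t| / min s t := by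
  rcases le_total t s with h | h
  · rw [abs_of_nonneg (sub_nonneg.mpr h), min_eq_right h]
    exact integral_abs_heatKernel_sub_le_of_le ht h
  · rw [abs_of_nonpos (sub_nonpos.mpr h), min_eq_left h, neg_sub]
    simpa only [abs_sub_comm] using integral_abs_heatKernel_sub_le_of_le hs h

lemma abs_heatKernel_taylor_le {t d : ℝ} (ht : 0 < t) (hd : d ^ 2 ≤ t) (x : ℝ) :
    |heatKernel t (x + d) - heatKernel t x - d * heatKernelDx t x|
      ≤ 8 * d ^ 2 / t * heatKernel (4 * t) x := by
  refine (abs_sub_sub_mul_le_of_abs_deriv2_le (C := 8 / t * heatKernel (4 * t) x)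
    (fun u _ => hasDerivAt_heatKernel t u)
    (fun u _ => hasDerivAt_heatKernelDx t u) fun u hu => ?_).trans_eq (by ring)
  have hux : (u - x) ^ 2 ≤ 2 * t := by
    have := Set.abs_sub_left_of_mem_uIcc hu
    rw [add_sub_cancel_left, ← sq_le_sq] at this
    linarith
  calc |heatKernelDxx t u| ≤ 4 / t * heatKernel (2 * t) u := abs_heatKernelDxx_le ht u
    _ ≤ 4 / t * (2 * heatKernel (2 * (2 * t)) x) := by
        gcongr; exact heatKernel_le_two_mul_heatKernel_two_mul_of_sq_sub_le (by positivity) hux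
    _ = 8 / t * heatKernel (4 * t) x := by rw [show 2 * (2 * t) = 4 * t by ring]; ring

lemma integral_abs_heatKernel_taylor_le {t : ℝ} (ht : 0 < t) (d : ℝ) :
    ∫ x, |heatKernel t (x + d) - heatKernel t x - d * heatKernelDx t x| ≤ 8 * d ^ 2 / t := by
  have hshift := (integrable_heatKernel ht).comp_add_right d
  have hint := integrable_heatKernel_increment ht ht d
  rcases le_or_gt (d ^ 2) t with hsmall | hlarge
  · calc _ ≤ ∫ x, 8 * d ^ 2 / t * heatKernel (4 * t) x :=
          integral_mono hint.abs ((integrable_heatKernel (by positivity)).const_mul _)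
            (abs_heatKernel_taylor_le ht hsmall)
      _ = 8 * d ^ 2 / t := by
          rw [integral_const_mul, integral_heatKernel (by positivity), mul_one]
  · have hdt : 1 < |d| / √t :=
      (one_lt_div (sqrt_pos.mpr ht)).mpr ((sqrt_lt_sqrt ht.le hlarge).trans_eq (sqrt_sq_eq_abs d))
    have hsq : d ^ 2 / t = (|d| / √t) ^ 2 := by rw [div_pow, sq_abs, sq_sqrt ht.le]
    have hpair : Integrable fun x => heatKernel t (x + d) + heatKernel t x :=
      hshift.add (integrable_heatKernel ht)
    have hDx :=
      ((integrable_heatKernel (by positivity : 0 < 2 * t)).const_mul (2 / √t)).const_mul |d|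
    calc _ ≤ ∫ x, (heatKernel t (x + d) + heatKernel t x
            + |d| * (2 / √t * heatKernel (2 * t) x)) :=
          integral_mono hint.abs (hpair.add hDx) fun x =>
            (abs_sub _ _).trans (add_le_add (abs_heatKernel_sub_heatKernel_le_add _ _ _ _)
              (by rw [abs_mul]; gcongr; exact abs_heatKernelDx_le ht x))
      _ = 2 + 2 * (|d| / √t) := by
          rw [integral_add hpair hDx,
            integral_add hshift (integrable_heatKernel ht),
            integral_add_right_eq_self (heatKernel t), integral_heatKernel ht,
            integral_const_mul, integral_const_mul, integral_heatKernel (by positivity)]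
          ring
      _ ≤ 8 * d ^ 2 / t := by rw [mul_div_assoc, hsq]; nlinarith

lemma integral_abs_heatKernel_increment_le {s t : ℝ} (hs : 0 < s) (ht : 0 < t) (d : ℝ) :
    ∫ x, |heatKernel s (x + d) - heatKernel t x - d * heatKernelDx t x|
      ≤ 8 * (|s - t| + d ^ 2) / min s t := by
  have htime : Integrable fun x => |heatKernel s (x + d) - heatKernel t (x + d)| :=
    ((integrable_heatKernel hs).sub (integrable_heatKernel ht)).abs.comp_add_right d
  have htaylor := (integrable_heatKernel_increment ht ht d).abs
  calc _ ≤ ∫ x, (|heatKernel s (x + d) - heatKernel t (x + d)|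
          + |heatKernel t (x + d) - heatKernel t x - d * heatKernelDx t x|) :=
        integral_mono (integrable_heatKernel_increment hs ht d).abs (htime.add htaylor) fun x => by
          simp only [sub_sub]; exact abs_sub_le _ _ _
    _ = (∫ x, |heatKernel s x - heatKernel t x|)
          + ∫ x, |heatKernel t (x + d) - heatKernel t x - d * heatKernelDx t x| := by
        rw [integral_add htime htaylor,
          integral_add_right_eq_self (fun x => |heatKernel s x - heatKernel t x|)]
    _ ≤ 8 * |s - t| / min s t + 8 * d ^ 2 / min s t := by
        refine add_le_add (integral_abs_heatKernel_sub_le hs ht)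
          ((integral_abs_heatKernel_taylor_le ht d).trans ?_)
        exact div_le_div_of_nonneg_left (by positivity) (lt_min hs ht) (min_le_right s t)
    _ = 8 * (|s - t| + d ^ 2) / min s t := by ring

theorem stmt3 :
    ∃ C : ℝ, 0 < C ∧
      ∀ Ψ : ℝ → ℝ, Measurable Ψ → ∀ M : ℝ, (∀ z, |Ψ z| ≤ M) →
        ∀ x₁ x₂ y₁ y₂ : ℝ, 0 < x₁ → 0 < y₁ →
          |∫ z : ℝ, (heatG (x₁, x₂ - z) - heatG (y₁, y₂ - z)
              - (x₂ - y₂) * deriv (fun w => heatG (y₁, w)) (y₂ - z)) * Ψ z|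
            ≤ C * M * (|x₁ - y₁| + |x₂ - y₂| ^ 2) / min x₁ y₁ := by
  refine ⟨8, by norm_num, fun Ψ _ M hΨ x₁ x₂ y₁ y₂ hx hy => ?_⟩
  have hM : 0 ≤ M := (abs_nonneg _).trans (hΨ 0)
  have hderiv : deriv (fun w => heatG (y₁, w)) = heatKernelDx y₁ := by
    rw [funext (heatG_eq_heatKernel hy)]
    exact funext fun w => (hasDerivAt_heatKernel y₁ w).deriv
  set F := fun w => heatKernel x₁ (w + (x₂ - y₂)) - heatKernel y₁ w - (x₂ - y₂) * heatKernelDx y₁ w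
  have hF : ∀ z, heatG (x₁, x₂ - z) - heatG (y₁, y₂ - z)
      - (x₂ - y₂) * deriv (fun w => heatG (y₁, w)) (y₂ - z) = F (y₂ - z) := fun z => by
    rw [hderiv]
    simp only [F, heatG_eq_heatKernel hx, heatG_eq_heatKernel hy, sub_add_sub_cancel']
  simp_rw [hF]
  calc _ ≤ M * ∫ z, |F (y₂ - z)| :=
        abs_integral_mul_le_of_abs_le
          ((integrable_heatKernel_increment hx hy _).comp_sub_left y₂) hΨ
    _ = M * ∫ w, |F w| := by rw [integral_sub_left_eq_self (fun w => |F w|)]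
    _ ≤ M * (8 * (|x₁ - y₁| + (x₂ - y₂) ^ 2) / min x₁ y₁) := by
        gcongr; exact integral_abs_heatKernel_increment_le hx hy _
    _ = 8 * M * (|x₁ - y₁| + |x₂ - y₂| ^ 2) / min x₁ y₁ := by rw [sq_abs]; ring
end
end

section
/- There exists a constant C > 0 such that for all s, t > 0, ∫_ℝ |G(t,z) − G(s,z)| dz ≤ C |t−s| / min(s,t). -/
/-!
For `s ≤ t` both `G(s, ·)` and `G(t, ·)` lie below `(4πs)^{-1/2} e^{-z²/4t}`, whose integral is
`√(t/s)`. Since `|f - g| = 2 max f g - f - g`, two probability densities lying below a common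
majorant `h` are at `L¹` distance at most `2∫h - 2`; here this is `2(√(t/s) - 1) ≤ t/s - 1`.
-/

noncomputable section

open MeasureTheory

open Real

theorem integral_abs_sub_le_of_forall_le {α : Type*} [MeasurableSpace α] {μ : Measure α}
    {f g h : α → ℝ} (hf : Integrable f μ) (hg : Integrable g μ) (hh : Integrable h μ)
    (hfh : ∀ x, f x ≤ h x) (hgh : ∀ x, g x ≤ h x) :
    ∫ x, |f x - g x| ∂μ ≤ 2 * ∫ x, h x ∂μ - ∫ x, f x ∂μ - ∫ x, g x ∂μ := by
  have hmajor : ∀ x, |f x - g x| ≤ 2 * h x - f x - g x := fun x => by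
    rw [abs_le]
    constructor <;> linarith [hfh x, hgh x]
  calc ∫ x, |f x - g x| ∂μ ≤ ∫ x, (2 * h x - f x - g x) ∂μ :=
        integral_mono (hf.sub hg).abs ((hh.const_mul 2).sub hf |>.sub hg) hmajor
    _ = 2 * ∫ x, h x ∂μ - ∫ x, f x ∂μ - ∫ x, g x ∂μ := by
        rw [integral_sub (f := fun x => 2 * h x - f x) ((hh.const_mul 2).sub hf) hg,
          integral_sub (f := fun x => 2 * h x) (hh.const_mul 2) hf, integral_const_mul]

theorem integrable_exp_neg_sq_div {c : ℝ} (hc : 0 < c) :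
    Integrable fun z : ℝ => exp (-(z ^ 2) / c) := by
  simpa only [neg_mul, one_div, ← div_eq_inv_mul, neg_div] using
    integrable_exp_neg_mul_sq (one_div_pos.mpr hc)

theorem integral_exp_neg_sq_div (c : ℝ) :
    ∫ z : ℝ, exp (-(z ^ 2) / c) = √(π * c) := by
  have h := integral_gaussian (1 / c)
  simpa only [neg_mul, one_div, ← div_eq_inv_mul, div_inv_eq_mul, neg_div] using h

theorem heatG_of_pos {t : ℝ} (ht : 0 < t) (z : ℝ) :
    heatG (t, z) = (√(4 * π * t))⁻¹ * exp (-(z ^ 2) / (4 * t)) := by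
  rw [heatG, if_pos ht, sqrt_eq_rpow, ← rpow_neg (by positivity)]
  norm_num

theorem integrable_heatG {t : ℝ} (ht : 0 < t) : Integrable fun z : ℝ => heatG (t, z) := by
  simpa only [heatG_of_pos ht] using (integrable_exp_neg_sq_div (by positivity)).const_mul _

theorem integral_heatG {t : ℝ} (ht : 0 < t) : ∫ z : ℝ, heatG (t, z) = 1 := by
  rw [integral_congr_ae (.of_forall (heatG_of_pos ht)), integral_const_mul,
    integral_exp_neg_sq_div, show π * (4 * t) = 4 * π * t by ring]
  exact inv_mul_cancel₀ (by positivity)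

theorem heatG_le_of_mem_Icc {s t u : ℝ} (hs : 0 < s) (hu : u ∈ Set.Icc s t) (z : ℝ) :
    heatG (u, z) ≤ (√(4 * π * s))⁻¹ * exp (-(z ^ 2) / (4 * t)) := by
  obtain ⟨hsu, hut⟩ := hu
  have hu : 0 < u := hs.trans_le hsu
  rw [heatG_of_pos hu, neg_div, neg_div]
  gcongr

theorem integral_abs_sub_heatG_le {s t : ℝ} (hs : 0 < s) (hst : s ≤ t) :
    ∫ z : ℝ, |heatG (t, z) - heatG (s, z)| ≤ (t - s) / s := by
  have ht : 0 < t := hs.trans_le hst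
  have hL1 := integral_abs_sub_le_of_forall_le (integrable_heatG ht) (integrable_heatG hs)
    ((integrable_exp_neg_sq_div (by positivity : 0 < 4 * t)).const_mul (√(4 * π * s))⁻¹)
    (heatG_le_of_mem_Icc hs ⟨hst, le_rfl⟩) (heatG_le_of_mem_Icc hs ⟨le_rfl, hst⟩)
  rw [integral_heatG ht, integral_heatG hs, integral_const_mul, integral_exp_neg_sq_div]
    at hL1
  set a := √(4 * π * s)
  set b := √(π * (4 * t))
  calc ∫ z : ℝ, |heatG (t, z) - heatG (s, z)| ≤ 2 * (a⁻¹ * b) - 1 - 1 := hL1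
    _ ≤ (b / a) ^ 2 - 1 := by
      rw [inv_mul_eq_div]
      nlinarith [sq_nonneg (b / a - 1)]
    _ = (t - s) / s := by
      rw [div_pow, sq_sqrt (by positivity), sq_sqrt (by positivity)]
      field_simp

theorem stmt4 :
    ∃ C : ℝ, 0 < C ∧ ∀ s t : ℝ, 0 < s → 0 < t →
      ∫ z : ℝ, |heatG (t, z) - heatG (s, z)| ≤ C * |t - s| / min s t := by
  refine ⟨1, one_pos, fun s t hs ht => ?_⟩
  rw [one_mul]
  rcases le_total s t with hst | hts
  · rw [min_eq_left hst, abs_of_nonneg (sub_nonneg.mpr hst)]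
    exact integral_abs_sub_heatG_le hs hst
  · rw [min_eq_right hts, abs_sub_comm, abs_of_nonneg (sub_nonneg.mpr hts)]
    simpa only [abs_sub_comm] using integral_abs_sub_heatG_le ht hts
end
end

section
/- Let ψ : ℝ² → ℝ be twice continuously differentiable with compact support, and define T_ψ(ξ) := (∫_{ℝ²} |∂₁∂₂ψ(t,y)|² · |∫_0^t e^{iξu} du|² dt dy)^{1/2} for ξ ∈ ℝ. Then for all λ₁, λ₂ ∈ (0,2) with λ₁ + λ₂ > 3: (i) the integral ∫_{ℝ²} |T_ψ(x₁+x₂)|² |x₁|^{1−λ₁} |x₂|^{1−λ₂} dx₁ dx₂ is finite; (ii) there exist ε > 0 and C > 0 such that for every c ≥ 1 and each i ∈ {1,2}, ∫_{|x_i| ≥ c} |T_ψ(x₁+x₂)|² |x₁|^{1−λ₁} |x₂|^{1−λ₂} dx₁ dx₂ ≤ C c^{−ε}. -/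
noncomputable section

open MeasureTheory

/-- Partial derivative in the first variable. -/
def pd1 (f : ℝ × ℝ → ℝ) (p : ℝ × ℝ) : ℝ := deriv (fun t => f (t, p.2)) p.1

/-- Partial derivative in the second variable. -/
def pd2 (f : ℝ × ℝ → ℝ) (p : ℝ × ℝ) : ℝ := deriv (fun x => f (p.1, x)) p.2

/-- `T_ψ(ξ) = (∫ |∂₁∂₂ψ(t,y)|² |∫_0^t e^{iξu} du|² dt dy)^{1/2}`. -/
def Tpsi (ψ : ℝ × ℝ → ℝ) (ξ : ℝ) : ℝ :=
  Real.sqrt (∫ p : ℝ × ℝ, |pd1 (pd2 ψ) p| ^ 2 *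
    ‖∫ u in (0:ℝ)..p.1, Complex.exp (Complex.I * (ξ : ℂ) * (u : ℂ))‖ ^ 2)

/-
Bounding the inner oscillatory integral by `|t|` and by `2 / |ξ|` gives
`|T_ψ(ξ)|² ≤ A (1 + ξ²)⁻¹` with `A = ∫ |∂₁∂₂ψ(t, y)|² (t² + 4)`, so both claims reduce to the
weight `(1 + (x₁ + x₂)²)⁻¹ |x₁|^p |x₂|^q` with `p = 1 - λ₁ > -1`, `q = 1 - λ₂ > -1` and
`p + q < -1`. After the shear `s = x₁ + x₂`, the substitution `x₁ = s u` turns the inner integral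
into `|s|^(1 + p + q) ∫ |u|^p |1 - u|^q du`, which is finite and integrable against `(1 + s²)⁻¹`.
As `p + q < -1` is strict, a little decay `ε` in `x_i` is left over; a Chebyshev-type estimate
turns it into the tail bound `c^(-ε)`.
-/

open Set Filter Asymptotics

lemma norm_exp_I_mul_ofReal_mul (ξ u : ℝ) : ‖Complex.exp (Complex.I * ξ * u)‖ = 1 := by
  rw [Complex.norm_exp]; simp

lemma norm_integral_exp_I_mul_le_abs (ξ t : ℝ) :
    ‖∫ u in (0:ℝ)..t, Complex.exp (Complex.I * ξ * u)‖ ≤ |t| := by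
  simpa using intervalIntegral.norm_integral_le_of_norm_le_const (a := 0) (b := t)
    (fun u _ => (norm_exp_I_mul_ofReal_mul ξ u).le)

lemma abs_mul_norm_integral_exp_I_mul_le_two (ξ t : ℝ) :
    |ξ| * ‖∫ u in (0:ℝ)..t, Complex.exp (Complex.I * ξ * u)‖ ≤ 2 := by
  rcases eq_or_ne ξ 0 with rfl | hξ
  · simp
  have hIξ : Complex.I * ξ ≠ 0 := mul_ne_zero Complex.I_ne_zero (Complex.ofReal_ne_zero.2 hξ)
  rw [integral_exp_mul_complex hIξ, norm_div, norm_mul, Complex.norm_I, one_mul,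
    Complex.norm_real, Real.norm_eq_abs, mul_div_cancel₀ _ (abs_ne_zero.2 hξ)]
  calc _ ≤ ‖Complex.exp (Complex.I * ξ * t)‖ + ‖Complex.exp (Complex.I * ξ * (0:ℝ))‖ :=
        norm_sub_le _ _
    _ = 2 := by rw [norm_exp_I_mul_ofReal_mul, norm_exp_I_mul_ofReal_mul]; norm_num

lemma norm_integral_exp_I_mul_sq_le (ξ t : ℝ) :
    ‖∫ u in (0:ℝ)..t, Complex.exp (Complex.I * ξ * u)‖ ^ 2 ≤ (t ^ 2 + 4) * (1 + ξ ^ 2)⁻¹ := by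
  rw [le_mul_inv_iff₀ (by positivity)]
  set N := ‖∫ u in (0:ℝ)..t, Complex.exp (Complex.I * ξ * u)‖
  have h₁ : N ^ 2 ≤ t ^ 2 := by
    simpa only [sq_abs] using
      pow_le_pow_left₀ (norm_nonneg _) (norm_integral_exp_I_mul_le_abs ξ t) 2
  have h₂ : (|ξ| * N) ^ 2 ≤ 2 ^ 2 :=
    pow_le_pow_left₀ (by positivity) (abs_mul_norm_integral_exp_I_mul_le_two ξ t) 2
  calc N ^ 2 * (1 + ξ ^ 2) = N ^ 2 + (|ξ| * N) ^ 2 := by rw [mul_pow, sq_abs]; ring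
    _ ≤ t ^ 2 + 4 := by linarith

lemma pd1_eq_fderiv {f : ℝ × ℝ → ℝ} {p : ℝ × ℝ} (hf : DifferentiableAt ℝ f p) :
    pd1 f p = fderiv ℝ f p (1, 0) :=
  (hf.hasFDerivAt.comp_hasDerivAt p.1 ((hasDerivAt_id p.1).prodMk (hasDerivAt_const p.1 p.2))).deriv

lemma pd2_eq_fderiv {f : ℝ × ℝ → ℝ} {p : ℝ × ℝ} (hf : DifferentiableAt ℝ f p) :
    pd2 f p = fderiv ℝ f p (0, 1) :=
  (hf.hasFDerivAt.comp_hasDerivAt p.2 ((hasDerivAt_const p.2 p.1).prodMk (hasDerivAt_id p.2))).deriv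

lemma ContDiff.pd1 {f : ℝ × ℝ → ℝ} {n : WithTop ℕ∞} (hf : ContDiff ℝ (n + 1) f) :
    ContDiff ℝ n (pd1 f) := by
  rw [show _root_.pd1 f = fun p => fderiv ℝ f p (1, 0) from
    funext fun p => pd1_eq_fderiv (hf.differentiable (by simp) p)]
  exact (hf.fderiv_right le_rfl).clm_apply contDiff_const

lemma ContDiff.pd2 {f : ℝ × ℝ → ℝ} {n : WithTop ℕ∞} (hf : ContDiff ℝ (n + 1) f) :
    ContDiff ℝ n (pd2 f) := by
  rw [show _root_.pd2 f = fun p => fderiv ℝ f p (0, 1) from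
    funext fun p => pd2_eq_fderiv (hf.differentiable (by simp) p)]
  exact (hf.fderiv_right le_rfl).clm_apply contDiff_const

lemma HasCompactSupport.pd1 {f : ℝ × ℝ → ℝ} (hf : HasCompactSupport f)
    (hd : Differentiable ℝ f) : HasCompactSupport (pd1 f) := by
  rw [show _root_.pd1 f = fun p => fderiv ℝ f p (1, 0) from funext fun p => pd1_eq_fderiv (hd p)]
  exact hf.fderiv_apply ℝ _

lemma HasCompactSupport.pd2 {f : ℝ × ℝ → ℝ} (hf : HasCompactSupport f)
    (hd : Differentiable ℝ f) : HasCompactSupport (pd2 f) := by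
  rw [show _root_.pd2 f = fun p => fderiv ℝ f p (0, 1) from funext fun p => pd2_eq_fderiv (hd p)]
  exact hf.fderiv_apply ℝ _

lemma measurable_Tpsi {ψ : ℝ × ℝ → ℝ} (hD : Continuous (pd1 (pd2 ψ))) : Measurable (Tpsi ψ) := by
  refine Real.continuous_sqrt.measurable.comp (StronglyMeasurable.integral_prod_right
    (f := fun (ξ : ℝ) (p : ℝ × ℝ) => |pd1 (pd2 ψ) p| ^ 2 *
      ‖∫ u in (0:ℝ)..p.1, Complex.exp (Complex.I * (ξ : ℂ) * u)‖ ^ 2) ?_).measurable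
  exact Continuous.stronglyMeasurable (by fun_prop)

lemma sq_Tpsi_le {ψ : ℝ × ℝ → ℝ}
    (hD : Integrable fun p : ℝ × ℝ => |pd1 (pd2 ψ) p| ^ 2 * (p.1 ^ 2 + 4)) (ξ : ℝ) :
    Tpsi ψ ξ ^ 2 ≤ (∫ p : ℝ × ℝ, |pd1 (pd2 ψ) p| ^ 2 * (p.1 ^ 2 + 4)) * (1 + ξ ^ 2)⁻¹ := by
  rw [Tpsi, Real.sq_sqrt (integral_nonneg fun p => by positivity), ← integral_mul_const]
  refine integral_mono_of_nonneg (ae_of_all _ fun p => by positivity) (hD.mul_const _)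
    (ae_of_all _ fun p => ?_)
  dsimp only
  rw [mul_assoc]
  exact mul_le_mul_of_nonneg_left (norm_integral_exp_I_mul_sq_le _ _) (by positivity)


lemma continuous_pd1_pd2 {ψ : ℝ × ℝ → ℝ} (hψ : ContDiff ℝ 2 ψ) : Continuous (pd1 (pd2 ψ)) :=
  (ContDiff.pd1 (n := 0) (ContDiff.pd2 (n := 1) hψ)).continuous

lemma integrable_sq_pd1_pd2_mul {ψ : ℝ × ℝ → ℝ} (hψ : ContDiff ℝ 2 ψ) (hψc : HasCompactSupport ψ) :
    Integrable fun p : ℝ × ℝ => |pd1 (pd2 ψ) p| ^ 2 * (p.1 ^ 2 + 4) := by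
  have h₂ : ContDiff ℝ 1 (pd2 ψ) := ContDiff.pd2 (n := 1) hψ
  have hD : HasCompactSupport (pd1 (pd2 ψ)) :=
    (hψc.pd2 (hψ.differentiable (by simp))).pd1 (h₂.differentiable (by simp))
  have hc := continuous_pd1_pd2 hψ
  exact Continuous.integrable_of_hasCompactSupport (by fun_prop)
    ((hD.comp_left (g := fun x => |x| ^ 2) (by simp)).mul_right)

lemma locallyIntegrable_abs_rpow {p : ℝ} (hp : -1 < p) :
    LocallyIntegrable (fun x : ℝ => |x| ^ p) :=
  locallyIntegrable_of_norm_le_rpow (α := -p) (C := 1) (by simp) (by simpa using neg_lt.1 hp)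
    (ae_of_all _ fun x => by simp [abs_nonneg, Real.abs_rpow_of_nonneg])
    (measurable_id.abs.pow_const p).aestronglyMeasurable

lemma integrable_inv_one_add_sq_mul_abs_rpow {r : ℝ} (hr₀ : -1 < r) (hr₁ : r < 1) :
    Integrable (fun s : ℝ => (1 + s ^ 2)⁻¹ * |s| ^ r) := by
  have hcont : Continuous fun s : ℝ => (1 + s ^ 2)⁻¹ :=
    (continuous_const.add (continuous_pow 2)).inv₀ fun s => (by positivity : (0:ℝ) < 1 + s ^ 2).ne'
  have hloc := (locallyIntegrable_abs_rpow hr₀).continuous_mul hcont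
  refine hloc.integrable_of_isBigO_atTop_of_norm_isNegInvariant (g := fun s => s ^ (r - 2))
    (ae_of_all _ fun s => by simp) ?_ (integrableAtFilter_rpow_atTop_iff.2 (by linarith))
  refine IsBigO.of_bound 1 ((eventually_gt_atTop 0).mono fun s hs => ?_)
  have h1 : (1 + s ^ 2)⁻¹ ≤ s ^ (-2 : ℝ) := by
    rw [Real.rpow_neg hs.le, Real.rpow_two]
    exact inv_anti₀ (by positivity) (by linarith)
  rw [Real.norm_of_nonneg (by positivity), Real.norm_of_nonneg (by positivity), abs_of_pos hs,
    one_mul, sub_eq_add_neg, Real.rpow_add hs, mul_comm]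
  exact mul_le_mul_of_nonneg_left h1 (by positivity)

lemma MeasureTheory.LocallyIntegrable.comp_sub_left {E : Type*} [NormedAddCommGroup E]
    {f : ℝ → E} (hf : LocallyIntegrable f) (a : ℝ) : LocallyIntegrable (fun x => f (a - x)) := by
  have hmap : Measure.map (Homeomorph.subLeft a) volume = volume :=
    (Measure.measurePreserving_sub_left volume a).map_eq
  exact (locallyIntegrable_map_homeomorph (Homeomorph.subLeft a)).1 (by rwa [hmap])

lemma abs_rpow_mul_abs_one_sub_rpow_le {p q : ℝ} (hp : p ≤ 0) (hq : q ≤ 0) (u : ℝ) :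
    |u| ^ p * |1 - u| ^ q ≤ (1 / 2) ^ q * |u| ^ p + (1 / 2) ^ p * |1 - u| ^ q := by
  rcases le_total (1 / 2) |1 - u| with h | h
  · have := Real.rpow_le_rpow_of_nonpos (by norm_num) h hq
    nlinarith [Real.rpow_nonneg (abs_nonneg u) p, Real.rpow_nonneg (abs_nonneg (1 - u)) q,
      Real.rpow_nonneg (by norm_num : (0:ℝ) ≤ 1 / 2) p]
  · have h' : 1 / 2 ≤ |u| := by linarith [abs_sub_abs_le_abs_sub 1 u, abs_one (α := ℝ)]
    have := Real.rpow_le_rpow_of_nonpos (by norm_num) h' hp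
    nlinarith [Real.rpow_nonneg (abs_nonneg u) p, Real.rpow_nonneg (abs_nonneg (1 - u)) q,
      Real.rpow_nonneg (by norm_num : (0:ℝ) ≤ 1 / 2) q]

lemma integrable_abs_rpow_mul_abs_one_sub_rpow {p q : ℝ} (hp : -1 < p) (hq : -1 < q)
    (hpq : p + q < -1) : Integrable (fun u : ℝ => |u| ^ p * |1 - u| ^ q) := by
  have hp₀ : p ≤ 0 := by linarith
  have hq₀ : q ≤ 0 := by linarith
  have hmeas : AEStronglyMeasurable (fun u : ℝ => |u| ^ p * |1 - u| ^ q) :=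
    ((measurable_id.abs.pow_const p).mul
      ((measurable_const.sub measurable_id).abs.pow_const q)).aestronglyMeasurable
  have hloc : LocallyIntegrable (fun u : ℝ => |u| ^ p * |1 - u| ^ q) := by
    refine (((locallyIntegrable_abs_rpow hp).smul ((1 / 2 : ℝ) ^ q)).add
      (((locallyIntegrable_abs_rpow hq).comp_sub_left 1).smul ((1 / 2 : ℝ) ^ p))).mono hmeas
      (ae_of_all _ fun u => ?_)
    simp only [Pi.add_apply, Pi.smul_apply, smul_eq_mul]
    rw [Real.norm_of_nonneg (by positivity), Real.norm_of_nonneg (by positivity)]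
    exact abs_rpow_mul_abs_one_sub_rpow_le hp₀ hq₀ u
  refine hloc.integrable_of_isBigO_cocompact (g := fun u : ℝ => ((1 + ‖u‖) / 3) ^ (p + q)) ?_ ?_
  · refine IsBigO.of_bound 1 ((tendsto_norm_cocompact_atTop.eventually_ge_atTop 2).mono
      fun u hu => ?_)
    rw [Real.norm_eq_abs] at hu
    have h1 : (1 + |u|) / 3 ≤ |u| := by linarith
    have h2 : (1 + |u|) / 3 ≤ |1 - u| := by
      linarith [abs_sub_abs_le_abs_sub u 1, abs_sub_comm u 1, abs_one (α := ℝ)]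
    have h0 : 0 < (1 + |u|) / 3 := by positivity
    rw [Real.norm_of_nonneg (by positivity), Real.norm_of_nonneg (by positivity), one_mul,
      Real.norm_eq_abs, Real.rpow_add h0]
    exact mul_le_mul (Real.rpow_le_rpow_of_nonpos h0 h1 hp₀)
      (Real.rpow_le_rpow_of_nonpos h0 h2 hq₀) (by positivity) (by positivity)
  · refine Integrable.integrableAtFilter ?_ _
    have := (integrable_one_add_norm (E := ℝ) (μ := volume) (r := -(p + q))
      (by simp; linarith)).div_const (3 ^ (p + q))
    refine this.congr (ae_of_all _ fun u => ?_)
    simp only [neg_neg]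
    rw [Real.div_rpow (by positivity) (by norm_num)]

lemma abs_rpow_mul_abs_sub_rpow_eq {s : ℝ} (hs : s ≠ 0) (p q x : ℝ) :
    |x| ^ p * |s - x| ^ q = |s| ^ (p + q) * (|s⁻¹ * x| ^ p * |1 - s⁻¹ * x| ^ q) := by
  obtain ⟨y, rfl⟩ : ∃ y, x = s * y := ⟨s⁻¹ * x, by field_simp⟩
  rw [inv_mul_cancel_left₀ hs, show s - s * y = s * (1 - y) by ring, abs_mul, abs_mul,
    Real.mul_rpow (abs_nonneg _) (abs_nonneg _), Real.mul_rpow (abs_nonneg _) (abs_nonneg _),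
    Real.rpow_add (abs_pos.2 hs)]
  ring

lemma integrable_abs_rpow_mul_abs_sub_rpow {p q s : ℝ} (hp : -1 < p) (hq : -1 < q)
    (hpq : p + q < -1) (hs : s ≠ 0) :
    Integrable (fun x : ℝ => |x| ^ p * |s - x| ^ q) := by
  simp_rw [abs_rpow_mul_abs_sub_rpow_eq hs]
  exact ((integrable_abs_rpow_mul_abs_one_sub_rpow hp hq hpq).comp_mul_left'
    (inv_ne_zero hs)).const_mul _

lemma integral_abs_rpow_mul_abs_sub_rpow {p q s : ℝ} (hs : s ≠ 0) :
    ∫ x : ℝ, |x| ^ p * |s - x| ^ q = |s| ^ (p + q + 1) * ∫ u : ℝ, |u| ^ p * |1 - u| ^ q := by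
  simp_rw [abs_rpow_mul_abs_sub_rpow_eq hs]
  rw [integral_const_mul, Measure.integral_comp_inv_mul_left (fun u => |u| ^ p * |1 - u| ^ q),
    smul_eq_mul, Real.rpow_add_one (abs_ne_zero.2 hs)]
  ring

lemma integrable_inv_one_add_sq_add_mul_abs_rpow_mul_abs_rpow {p q : ℝ} (hp : -1 < p)
    (hq : -1 < q) (hpq : p + q < -1) :
    Integrable (fun x : ℝ × ℝ => (1 + (x.1 + x.2) ^ 2)⁻¹ * |x.1| ^ p * |x.2| ^ q) := by
  set F : ℝ × ℝ → ℝ := fun z => (1 + z.2 ^ 2)⁻¹ * (|z.1| ^ p * |z.2 - z.1| ^ q)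
  have hF : AEStronglyMeasurable F (volume.prod volume) := by
    apply Measurable.aestronglyMeasurable
    fun_prop
  have hshear : (fun x : ℝ × ℝ => (1 + (x.1 + x.2) ^ 2)⁻¹ * |x.1| ^ p * |x.2| ^ q) =
      F ∘ fun z => (z.1, z.1 + z.2) := by
    ext x; simp only [F, Function.comp_apply, add_sub_cancel_left]; ring
  rw [hshear, Measure.volume_eq_prod,
    (measurePreserving_prod_add volume volume).integrable_comp hF, integrable_prod_iff' hF]
  have hne : ∀ᵐ s : ℝ, s ≠ 0 := Measure.ae_ne volume 0
  constructor
  · filter_upwards [hne] with s hs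
    exact (integrable_abs_rpow_mul_abs_sub_rpow hp hq hpq hs).const_mul ((1 + s ^ 2)⁻¹)
  · refine ((integrable_inv_one_add_sq_mul_abs_rpow (r := p + q + 1) (by linarith)
      (by linarith)).mul_const (∫ u : ℝ, |u| ^ p * |1 - u| ^ q)).congr ?_
    filter_upwards [hne] with s hs
    have hnorm : ∀ x : ℝ, ‖F (x, s)‖ = (1 + s ^ 2)⁻¹ * (|x| ^ p * |s - x| ^ q) :=
      fun x => Real.norm_of_nonneg (by positivity)
    rw [integral_congr_ae (ae_of_all _ hnorm), integral_const_mul,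
      integral_abs_rpow_mul_abs_sub_rpow hs]
    ring

lemma integrable_comp_add_mul_abs_rpow_mul_abs_rpow {h : ℝ → ℝ} {A p q : ℝ} (hh : Measurable h)
    (hA : ∀ ξ, |h ξ| ≤ A * (1 + ξ ^ 2)⁻¹) (hp : -1 < p) (hq : -1 < q) (hpq : p + q < -1) :
    Integrable (fun x : ℝ × ℝ => h (x.1 + x.2) * |x.1| ^ p * |x.2| ^ q) := by
  refine ((integrable_inv_one_add_sq_add_mul_abs_rpow_mul_abs_rpow hp hq hpq).const_mul A).mono'
    (by fun_prop) (ae_of_all _ fun x => ?_)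
  calc ‖h (x.1 + x.2) * |x.1| ^ p * |x.2| ^ q‖ = |h (x.1 + x.2)| * |x.1| ^ p * |x.2| ^ q := by
        simp only [Real.norm_eq_abs, abs_mul, abs_of_nonneg (Real.rpow_nonneg (abs_nonneg _) _)]
    _ ≤ A * (1 + (x.1 + x.2) ^ 2)⁻¹ * |x.1| ^ p * |x.2| ^ q := by gcongr; exact hA _
    _ = _ := by ring

lemma setIntegral_abs_ge_le_rpow_neg_mul {α : Type*} [MeasurableSpace α] {μ : Measure α}
    {f g : α → ℝ} {c ε : ℝ} (hf : 0 ≤ f) (hg : Measurable g) (hc : 0 < c) (hε : 0 ≤ ε)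
    (hfg : Integrable (fun x => f x * |g x| ^ ε) μ) :
    ∫ x in {x | c ≤ |g x|}, f x ∂μ ≤ c ^ (-ε) * ∫ x, f x * |g x| ^ ε ∂μ := by
  have hs : MeasurableSet {x | c ≤ |g x|} := measurableSet_le measurable_const hg.abs
  have hcε : c ^ (-ε) * c ^ ε = 1 := by
    rw [← Real.rpow_add hc, neg_add_cancel, Real.rpow_zero]
  rw [← integral_const_mul]
  refine (integral_mono_of_nonneg (ae_of_all _ fun x => hf x) (hfg.const_mul _).restrict
    ((ae_restrict_iff' hs).2 (ae_of_all _ fun x (hx : c ≤ |g x|) => ?_))).trans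
    (setIntegral_le_integral (hfg.const_mul _) (ae_of_all _ fun x =>
      mul_nonneg (by positivity) (mul_nonneg (hf x) (by positivity))))
  calc f x = c ^ (-ε) * (f x * c ^ ε) := by rw [mul_left_comm, hcε, mul_one]
    _ ≤ c ^ (-ε) * (f x * |g x| ^ ε) := by
      have := hf x
      gcongr

theorem exists_setIntegral_abs_ge_le_mul_rpow_neg {h : ℝ → ℝ} {A p q : ℝ} (h₀ : ∀ ξ, 0 ≤ h ξ)
    (hh : Measurable h) (hA : ∀ ξ, |h ξ| ≤ A * (1 + ξ ^ 2)⁻¹) (hp : -1 < p) (hq : -1 < q)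
    (hpq : p + q < -1) :
    ∃ ε : ℝ, 0 < ε ∧ ∃ C : ℝ, 0 < C ∧ ∀ c : ℝ, 1 ≤ c →
      (∫ x in {x : ℝ × ℝ | c ≤ |x.1|}, h (x.1 + x.2) * |x.1| ^ p * |x.2| ^ q) ≤ C * c ^ (-ε) ∧
      (∫ x in {x : ℝ × ℝ | c ≤ |x.2|}, h (x.1 + x.2) * |x.1| ^ p * |x.2| ^ q) ≤ C * c ^ (-ε) := by
  obtain ⟨ε, hε, hpqε⟩ : ∃ ε : ℝ, 0 < ε ∧ p + q + ε < -1 :=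
    ⟨-(1 + p + q) / 2, by linarith, by linarith⟩
  set f : ℝ × ℝ → ℝ := fun x => h (x.1 + x.2) * |x.1| ^ p * |x.2| ^ q
  have hf : 0 ≤ f := fun x => mul_nonneg (mul_nonneg (h₀ _) (by positivity)) (by positivity)
  have hint₁ : Integrable fun x => f x * |x.1| ^ ε := by
    refine (integrable_comp_add_mul_abs_rpow_mul_abs_rpow hh hA (p := p + ε) (by linarith) hq
      (by linarith)).congr (ae_of_all _ fun x => ?_)
    simp only [f]
    rw [Real.rpow_add' (abs_nonneg _) (by linarith)]
    ring
  have hint₂ : Integrable fun x => f x * |x.2| ^ ε := by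
    refine (integrable_comp_add_mul_abs_rpow_mul_abs_rpow hh hA (q := q + ε) hp (by linarith)
      (by linarith)).congr (ae_of_all _ fun x => ?_)
    simp only [f]
    rw [Real.rpow_add' (abs_nonneg _) (by linarith)]
    ring
  set I₁ := ∫ x, f x * |x.1| ^ ε
  set I₂ := ∫ x, f x * |x.2| ^ ε
  have hI₁ : 0 ≤ I₁ := integral_nonneg fun x => mul_nonneg (hf x) (by positivity)
  have hI₂ : 0 ≤ I₂ := integral_nonneg fun x => mul_nonneg (hf x) (by positivity)
  refine ⟨ε, hε, max I₁ I₂ + 1, by positivity, fun c hc => ⟨?_, ?_⟩⟩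
  · refine (setIntegral_abs_ge_le_rpow_neg_mul hf measurable_fst (by linarith) hε.le hint₁).trans ?_
    rw [mul_comm]
    gcongr
    linarith [le_max_left I₁ I₂]
  · refine (setIntegral_abs_ge_le_rpow_neg_mul hf measurable_snd (by linarith) hε.le hint₂).trans ?_
    rw [mul_comm]
    gcongr
    linarith [le_max_right I₁ I₂]

theorem stmt12 (ψ : ℝ × ℝ → ℝ) (hψ : ContDiff ℝ 2 ψ) (hψc : HasCompactSupport ψ)
    (lam₁ lam₂ : ℝ) (h₁ : lam₁ ∈ Set.Ioo (0:ℝ) 2) (h₂ : lam₂ ∈ Set.Ioo (0:ℝ) 2)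
    (hsum : 3 < lam₁ + lam₂) :
    Integrable (fun x : ℝ × ℝ =>
      |Tpsi ψ (x.1 + x.2)| ^ 2 * |x.1| ^ (1 - lam₁) * |x.2| ^ (1 - lam₂)) ∧
    ∃ ε : ℝ, 0 < ε ∧ ∃ C : ℝ, 0 < C ∧ ∀ c : ℝ, 1 ≤ c →
      (∫ x in {x : ℝ × ℝ | c ≤ |x.1|},
          |Tpsi ψ (x.1 + x.2)| ^ 2 * |x.1| ^ (1 - lam₁) * |x.2| ^ (1 - lam₂))
        ≤ C * c ^ (-ε) ∧
      (∫ x in {x : ℝ × ℝ | c ≤ |x.2|},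
          |Tpsi ψ (x.1 + x.2)| ^ 2 * |x.1| ^ (1 - lam₁) * |x.2| ^ (1 - lam₂))
        ≤ C * c ^ (-ε) := by
  have hp : -1 < 1 - lam₁ := by linarith [h₁.2]
  have hq : -1 < 1 - lam₂ := by linarith [h₂.2]
  have hpq : (1 - lam₁) + (1 - lam₂) < -1 := by linarith
  have hmeas : Measurable fun ξ => |Tpsi ψ ξ| ^ 2 :=
    (measurable_Tpsi (continuous_pd1_pd2 hψ)).abs.pow_const 2
  have hbound (ξ : ℝ) : |(|Tpsi ψ ξ| ^ 2)| ≤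
      (∫ p : ℝ × ℝ, |pd1 (pd2 ψ) p| ^ 2 * (p.1 ^ 2 + 4)) * (1 + ξ ^ 2)⁻¹ := by
    rw [abs_of_nonneg (by positivity), sq_abs]
    exact sq_Tpsi_le (integrable_sq_pd1_pd2_mul hψ hψc) ξ
  exact ⟨integrable_comp_add_mul_abs_rpow_mul_abs_rpow hmeas hbound hp hq hpq,
    exists_setIntegral_abs_ge_le_mul_rpow_neg (fun ξ => by positivity) hmeas hbound hp hq hpq⟩
end
end
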